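/- For every nonempty path query q = R1(x1,x2), ..., Rk(xk,x_{k+1}) and constant c, let q_c be the query obtained by replacing x1 with c. Then there exists a first-order sentence ψ_c such that for every database instance db, every repair of db satisfies q_c if and only if db satisfies ψ_c. Concretely, ψ_c can be constructed inductively: for k = 1, ψ_c = ∃y R1(c, y); for k > 1, ψ_c = ∃y R1(c,y) ∧ ∀z (R1(c,z) → φ(z)), where φ(z) is the inductively-constructed rewriting for the tail query starting at z. -/

import Mathlib

open FirstOrder

/-- The first-order language with a constant symbol for every element of `C`
and a binary relation symbol for every relation name in `σ`. -/
def PathLang (σ C : Type) : FirstOrder.Language where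
  Functions n := match n with
    | 0 => C
    | _ + 1 => Empty
  Relations n := match n with
    | 2 => σ
    | 0 => Empty
    | 1 => Empty
    | _ + 3 => Empty

/-- A database instance `db` viewed as a structure for `PathLang σ C`, with
domain `C`: constants are interpreted by themselves and a binary relation `R`
holds of `(x, y)` iff the fact `R(x, y)` is in `db`. -/
def dbStructure {σ C : Type} (db : Finset (σ × C × C)) :
    (PathLang σ C).Structure C where
  funMap {n} := match n with
    | 0 => fun c _ => c
    | _ + 1 => fun e _ => e.elim
  RelMap {n} := match n with
    | 2 => fun R x => (R, x 0, x 1) ∈ db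
    | 0 => fun e _ => e.elim
    | 1 => fun e _ => e.elim
    | _ + 3 => fun e _ => e.elim

/-- `Reaches r c t` : there is a path in the database instance `r`
starting at `c` with trace `t`. -/
inductive Reaches {σ C : Type} (r : Finset (σ × C × C)) : C → List σ → Prop
  | nil (c : C) : Reaches r c []
  | cons {c d : C} {R : σ} {t : List σ} :
      (R, c, d) ∈ r → Reaches r d t → Reaches r c (R :: t)

/-- A database instance is consistent if no two distinct facts are key-equal. -/
def Consistent {σ C : Type} (r : Finset (σ × C × C)) : Prop :=
  ∀ f ∈ r, ∀ g ∈ r, f.1 = g.1 → f.2.1 = g.2.1 → f = g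

/-- A repair of `db` is a maximal consistent subset of `db`. -/
def Repair {σ C : Type} (db r : Finset (σ × C × C)) : Prop :=
  r ⊆ db ∧ Consistent r ∧ ∀ s, r ⊆ s → s ⊆ db → Consistent s → s = r

/-! A repair keeps exactly one fact for each key `(R, a)` of the database, so its path from `c`
with trace `q` is determined by following these choices. It fails to exist exactly when some
sequence of choices that never picks two different facts for the same key leads along a prefix
of `q` to a key with no fact at all; and every such consistent sequence extends to a repair.
As the path has at most `|q|` steps, this is first order: the inductive rewriting
`∃ y R(c, y) ∧ ∀ z (R(c, z) → φ(z))`, where `z` ranges only over the choices consistent with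
the facts already picked along the path (paths of a query with self-joins may revisit a key). -/

open FirstOrder.Language

variable {σ C : Type}

theorem Consistent.mono {s r : Finset (σ × C × C)} (hr : Consistent r) (hsr : s ⊆ r) :
    Consistent s :=
  fun f hf g hg => hr f (hsr hf) g (hsr hg)

theorem Consistent.insert [DecidableEq σ] [DecidableEq C] {h : Finset (σ × C × C)}
    {f : σ × C × C} (hh : Consistent h)
    (hf : ∀ g ∈ h, g.1 = f.1 → g.2.1 = f.2.1 → g.2.2 = f.2.2) : Consistent (insert f h) := by
  have hkey : ∀ g ∈ h, g.1 = f.1 → g.2.1 = f.2.1 → g = f := fun g hg h₁ h₂ =>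
    Prod.ext h₁ (Prod.ext h₂ (hf g hg h₁ h₂))
  intro g₁ hg₁ g₂ hg₂ h₁ h₂
  rcases Finset.mem_insert.1 hg₁ with hg₁ | hg₁ <;> rcases Finset.mem_insert.1 hg₂ with hg₂ | hg₂
  · rw [hg₁, hg₂]
  · rw [hg₁] at h₁ h₂ ⊢
    exact (hkey g₂ hg₂ h₁.symm h₂.symm).symm
  · rw [hg₂] at h₁ h₂ ⊢
    exact hkey g₁ hg₁ h₁ h₂
  · exact hh g₁ hg₁ g₂ hg₂ h₁ h₂

theorem exists_repair_superset {db s : Finset (σ × C × C)} (hs : s ⊆ db)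
    (hcons : Consistent s) : ∃ r, s ⊆ r ∧ Repair db r := by
  classical
  obtain ⟨r, hsr, hmax⟩ := (db.powerset.filter Consistent).exists_le_maximal
    (Finset.mem_filter.2 ⟨Finset.mem_powerset.2 hs, hcons⟩)
  obtain ⟨hrdb, hr⟩ := Finset.mem_filter.1 hmax.prop
  refine ⟨r, hsr, Finset.mem_powerset.1 hrdb, hr, fun s' hrs' hs'db hs' => ?_⟩
  exact (hmax.le_of_ge (Finset.mem_filter.2 ⟨Finset.mem_powerset.2 hs'db, hs'⟩) hrs').antisymm hrs'

theorem Repair.exists_mem {db r : Finset (σ × C × C)} (hr : Repair db r) {R : σ} {a b : C}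
    (hab : (R, a, b) ∈ db) : ∃ b', (R, a, b') ∈ r := by
  classical
  by_contra! hdead
  obtain ⟨hrdb, hcons, hmax⟩ := hr
  have hins : Consistent (insert (R, a, b) r) :=
    hcons.insert fun ⟨R', a', b'⟩ hg h₁ h₂ => by
      simp only at h₁ h₂
      subst h₁ h₂
      exact absurd hg (hdead b')
  exact hdead b (hmax _ (Finset.subset_insert _ _) (Finset.insert_subset hab hrdb) hins ▸
    Finset.mem_insert_self _ _)

theorem Consistent.eq_of_mem {r : Finset (σ × C × C)} (hr : Consistent r) {R : σ} {a b b' : C}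
    (hb : (R, a, b) ∈ r) (hb' : (R, a, b') ∈ r) : b = b' :=
  congrArg (fun f => f.2.2) (hr _ hb _ hb' rfl rfl)

/-- `h` holds the facts already chosen along the path; a new choice `b` must agree with them on
a shared key. -/
def CertainFrom {M : Type*} [DecidableEq σ] [DecidableEq M] (E : σ → M → M → Prop) :
    Finset (σ × M × M) → M → List σ → Prop
  | _, _, [] => True
  | h, a, R :: t => (∃ b, E R a b) ∧
      ∀ b, E R a b → (∀ g ∈ h, g.1 = R → g.2.1 = a → g.2.2 = b) →
        CertainFrom E (insert (R, a, b) h) b t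

theorem certainFrom_iff_forall_repair [DecidableEq σ] [DecidableEq C]
    {db h : Finset (σ × C × C)} (hdb : h ⊆ db) (hh : Consistent h) (a : C) (t : List σ) :
    CertainFrom (fun R a b => (R, a, b) ∈ db) h a t ↔
      ∀ r, Repair db r → h ⊆ r → Reaches r a t := by
  induction t generalizing h a with
  | nil => exact iff_of_true trivial fun r _ _ => Reaches.nil a
  | cons R t ih =>
    constructor
    · rintro ⟨⟨b₀, hb₀⟩, hnext⟩ r hr hhr
      obtain ⟨b, hb⟩ := hr.exists_mem hb₀
      have hguard : ∀ g ∈ h, g.1 = R → g.2.1 = a → g.2.2 = b := fun g hg h₁ h₂ =>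
        congrArg (fun f => f.2.2) (hr.2.1 g (hhr hg) _ hb h₁ h₂)
      have hins : insert (R, a, b) h ⊆ r := Finset.insert_subset hb hhr
      have hcert := hnext b (hr.1 hb) hguard
      rw [ih (hins.trans hr.1) (hr.2.1.mono hins)] at hcert
      exact Reaches.cons hb (hcert r hr hins)
    · intro hall
      refine ⟨?_, fun b hb hguard => ?_⟩
      · obtain ⟨r, hhr, hr⟩ := exists_repair_superset hdb hh
        obtain ⟨d, hd, -⟩ : ∃ d, (R, a, d) ∈ r ∧ Reaches r d t := by
          cases hall r hr hhr with
          | cons hd hreach => exact ⟨_, hd, hreach⟩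
        exact ⟨d, hr.1 hd⟩
      rw [ih (Finset.insert_subset hb hdb) (hh.insert hguard)]
      intro r hr hins
      cases hall r hr ((Finset.subset_insert _ _).trans hins) with
      | cons hd hreach =>
        rwa [hr.2.1.eq_of_mem hd (hins (Finset.mem_insert_self _ _))] at hreach

theorem certainFrom_empty_iff_forall_repair [DecidableEq σ] [DecidableEq C]
    (db : Finset (σ × C × C)) (a : C) (t : List σ) :
    CertainFrom (fun R a b => (R, a, b) ∈ db) ∅ a t ↔ ∀ r, Repair db r → Reaches r a t := by
  simpa using certainFrom_iff_forall_repair (Finset.empty_subset db)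
    (fun _ h => absurd h (Finset.notMem_empty _)) a t

namespace PathLang

variable {α : Type*} {n : ℕ}

def relSymbol (R : σ) : (PathLang σ C).Relations 2 := R

def rel (R : σ) (x y : (PathLang σ C).Term (α ⊕ Fin n)) : (PathLang σ C).BoundedFormula α n :=
  (relSymbol R).boundedFormula₂ x y

def liftTerm : (PathLang σ C).Term (α ⊕ Fin n) → (PathLang σ C).Term (α ⊕ Fin (n + 1)) :=
  Term.relabel (Sum.map id Fin.castSucc)

def liftFact (f : σ × (PathLang σ C).Term (α ⊕ Fin n) × (PathLang σ C).Term (α ⊕ Fin n)) :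
    σ × (PathLang σ C).Term (α ⊕ Fin (n + 1)) × (PathLang σ C).Term (α ⊕ Fin (n + 1)) :=
  (f.1, liftTerm f.2.1, liftTerm f.2.2)

def compatible [DecidableEq σ] (R : σ) (x y : (PathLang σ C).Term (α ⊕ Fin n)) :
    List (σ × (PathLang σ C).Term (α ⊕ Fin n) × (PathLang σ C).Term (α ⊕ Fin n)) →
      (PathLang σ C).BoundedFormula α n
  | [] => ⊤
  | (R', x', y') :: H =>
    if R' = R then ((x' =' x) ⟹ (y' =' y)) ⊓ compatible R x y H else compatible R x y H

/-- The first-order rewriting of `CertainFrom`: the history `H` lists the facts chosen so far,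
as terms, and `&(Fin.last n)` is the newly chosen node. -/
def certainFormula [DecidableEq σ] : (n : ℕ) →
    List (σ × (PathLang σ C).Term (α ⊕ Fin n) × (PathLang σ C).Term (α ⊕ Fin n)) →
      (PathLang σ C).Term (α ⊕ Fin n) → List σ → (PathLang σ C).BoundedFormula α n
  | _, _, _, [] => ⊤
  | n, H, x, R :: t =>
    (∃' rel R (liftTerm x) &(Fin.last n)) ⊓
      ∀' ((rel R (liftTerm x) &(Fin.last n) ⊓
          compatible R (liftTerm x) &(Fin.last n) (H.map liftFact)) ⟹
        certainFormula (n + 1) ((R, liftTerm x, &(Fin.last n)) :: H.map liftFact)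
          &(Fin.last n) t)

variable {M : Type*} [(PathLang σ C).Structure M] (v : α → M) (xs : Fin n → M)

def realizeFact (w : α ⊕ Fin n → M)
    (f : σ × (PathLang σ C).Term (α ⊕ Fin n) × (PathLang σ C).Term (α ⊕ Fin n)) : σ × M × M :=
  (f.1, f.2.1.realize w, f.2.2.realize w)

theorem realize_rel (R : σ) (x y : (PathLang σ C).Term (α ⊕ Fin n)) :
    (rel R x y).Realize v xs ↔
      Structure.RelMap (relSymbol (C := C) R)
        ![x.realize (Sum.elim v xs), y.realize (Sum.elim v xs)] :=
  BoundedFormula.realize_rel₂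

theorem realize_liftTerm (x : (PathLang σ C).Term (α ⊕ Fin n)) (m : M) :
    (liftTerm x).realize (Sum.elim v (Fin.snoc xs m)) = x.realize (Sum.elim v xs) := by
  rw [liftTerm, Term.realize_relabel]
  congr 1
  funext i
  rcases i with i | i <;> simp

theorem realizeFact_comp_liftFact (m : M) :
    realizeFact (Sum.elim v (Fin.snoc xs m)) ∘ liftFact (σ := σ) (C := C) (α := α) =
      realizeFact (Sum.elim v xs) := by
  funext f
  simp only [Function.comp_apply, realizeFact, liftFact, realize_liftTerm]

theorem realize_compatible [DecidableEq σ] (R : σ) (x y : (PathLang σ C).Term (α ⊕ Fin n))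
    (H : List (σ × (PathLang σ C).Term (α ⊕ Fin n) × (PathLang σ C).Term (α ⊕ Fin n))) :
    (compatible R x y H).Realize v xs ↔
      ∀ g ∈ H.map (realizeFact (Sum.elim v xs)),
        g.1 = R → g.2.1 = x.realize (Sum.elim v xs) → g.2.2 = y.realize (Sum.elim v xs) := by
  induction H with
  | nil => simp [compatible]
  | cons f H ih =>
    obtain ⟨R', x', y'⟩ := f
    by_cases hR : R' = R <;> simp [compatible, hR, ih, realizeFact]

theorem realize_certainFormula [DecidableEq σ] [DecidableEq M] (t : List σ)
    (H : List (σ × (PathLang σ C).Term (α ⊕ Fin n) × (PathLang σ C).Term (α ⊕ Fin n)))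
    (x : (PathLang σ C).Term (α ⊕ Fin n)) :
    (certainFormula n H x t).Realize v xs ↔
      CertainFrom (fun R a b => Structure.RelMap (relSymbol (C := C) R) ![a, b])
        (H.map (realizeFact (Sum.elim v xs))).toFinset (x.realize (Sum.elim v xs)) t := by
  induction t generalizing n with
  | nil => simp [certainFormula, CertainFrom]
  | cons R t ih =>
    simp only [certainFormula, CertainFrom, BoundedFormula.realize_inf, BoundedFormula.realize_ex,
      BoundedFormula.realize_all, BoundedFormula.realize_imp, realize_rel, realize_compatible, ih,
      realize_liftTerm, List.map_cons, List.map_map, realizeFact_comp_liftFact, List.toFinset_cons,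
      List.mem_toFinset, realizeFact, Function.comp_apply, Term.realize_var, Sum.elim_inr,
      Fin.snoc_last, and_imp]

end PathLang

theorem stmt_17_general {σ C : Type} (q : List σ) (c : C) :
    ∃ ψ : (PathLang σ C).Sentence,
      ∀ db : Finset (σ × C × C),
        ((∀ r, Repair db r → Reaches r c q) ↔
          @FirstOrder.Language.Sentence.Realize (PathLang σ C) C
            (dbStructure db) ψ) := by
  classical
  refine ⟨PathLang.certainFormula 0 []
    (Constants.term (c : (PathLang σ C).Constants)) q, fun db => ?_⟩
  let := dbStructure db
  rw [Sentence.Realize, Formula.Realize, PathLang.realize_certainFormula, List.map_nil,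
    List.toFinset_nil]
  exact (certainFrom_empty_iff_forall_repair db c q).symm

/-- For every nonempty path query `q = R1 ... Rk` (a word over relation names)
and constant `c`, there is a first-order sentence `ψ_c` (over the language with
constants `C` and binary relations `σ`) such that for every database instance
`db`: every repair of `db` satisfies `q_c` (i.e. contains a path starting at
`c` with trace `q`) iff `db` satisfies `ψ_c`. -/
theorem stmt_17 {σ C : Type} (q : List σ) (hq : q ≠ []) (c : C) :
    ∃ ψ : (PathLang σ C).Sentence,
      ∀ db : Finset (σ × C × C),
        ((∀ r, Repair db r → Reaches r c q) ↔
          @FirstOrder.Language.Sentence.Realize (PathLang σ C) C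
            (dbStructure db) ψ) :=
  stmt_17_general q c
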